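/- arXiv:2201.11206 — 2 statements merged into one kernel-verified Lean document; each statement's English description precedes it below -/
import Mathlib

section
/- If $x \ge C (2n)^n \log^n(2n C B)$ for real numbers $n, C, B \ge 1$, then $x \ge C \log^n(B x)$. -/
/-! Write `x = C t ^ n`, so that `log (B x) = log B + log C + n log t` and it suffices to show
`log B + log C ≤ t - n log t`. The right side increases in `t` for `t ≥ n`, and the hypothesis
says `t ≥ s := 2 n L` with `L = log (2nCB) > 1/2`, so it is enough to check the inequality at
`t = s`; there `log L ≤ L - 1` turns it into `n (log B + log C) + n ≥ log B + log C`. -/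

open Real

lemma monotoneOn_sub_mul_log {n : ℝ} (hn : 0 < n) :
    MonotoneOn (fun t => t - n * log t) (Set.Ici n) := by
  intro s (hs : n ≤ s) t (ht : n ≤ t) hst
  have hs0 : 0 < s := hn.trans_le hs
  have ht0 : 0 < t := hs0.trans_le hst
  have hlog : log t - log s ≤ t / s - 1 := by
    rw [← log_div ht0.ne' hs0.ne']
    exact log_le_sub_one_of_pos (by positivity)
  have hscale : n * (t / s - 1) ≤ t - s :=
    calc n * (t / s - 1) = n / s * (t - s) := by field_simp
      _ ≤ 1 * (t - s) := by gcongr; exact (div_le_one hs0).2 hs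
      _ = t - s := one_mul _
  show s - n * log s ≤ t - n * log t
  linarith [mul_le_mul_of_nonneg_left hlog hn.le]

lemma half_lt_log_two_mul_mul_mul {n C B : ℝ} (hn : 1 ≤ n) (hC : 1 ≤ C) (hB : 1 ≤ B) :
    1 / 2 < log (2 * n * C * B) := by
  have h2 : 2 ≤ 2 * n * C * B := by
    have : 1 ≤ n * C * B := one_le_mul_of_one_le_of_one_le (one_le_mul_of_one_le_of_one_le hn hC) hB
    linarith
  linarith [log_two_gt_d9, log_le_log two_pos h2]

lemma log_add_log_add_mul_log_le {n C B : ℝ} (hn : 1 ≤ n) (hC : 1 ≤ C) (hB : 1 ≤ B) :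
    log B + log C + n * log (2 * n * log (2 * n * C * B)) ≤ 2 * n * log (2 * n * C * B) := by
  have hL_eq : log (2 * n * C * B) = log (2 * n) + log C + log B := by
    rw [log_mul (by positivity) (by positivity), log_mul (by positivity) (by positivity)]
  set L := log (2 * n * C * B)
  have hL : 0 < L := by linarith [half_lt_log_two_mul_mul_mul hn hC hB]
  have hlogL : log L ≤ L - 1 := log_le_sub_one_of_pos hL
  have hlog_sum : 0 ≤ log B + log C := add_nonneg (log_nonneg hB) (log_nonneg hC)
  rw [log_mul (by positivity) hL.ne']
  nlinarith

theorem stmt0_general (x n C B : ℝ) (hn : 1 ≤ n) (hC : 1 ≤ C) (hB : 1 ≤ B)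
    (h : C * (2 * n) ^ n * (Real.log (2 * n * C * B)) ^ n ≤ x) :
    C * (Real.log (B * x)) ^ n ≤ x := by
  have hn0 : 0 < n := by linarith
  have hC0 : 0 < C := by linarith
  set L := log (2 * n * C * B)
  have hL : 1 / 2 < L := half_lt_log_two_mul_mul_mul hn hC hB
  set s := 2 * n * L
  have hs : n ≤ s := by nlinarith
  have hsx : s ^ n ≤ x / C := by
    rw [mul_rpow (by positivity) (by positivity), le_div_iff₀ hC0]
    linarith
  have hxC : 0 ≤ x / C := (rpow_nonneg (by positivity) _).trans hsx
  set t := (x / C) ^ n⁻¹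
  have hst : s ≤ t := (le_rpow_inv_iff_of_pos (by positivity) hxC hn0).2 hsx
  have ht : 1 ≤ t := by linarith
  have hx : x = C * t ^ n := by
    rw [rpow_inv_rpow hxC hn0.ne', mul_div_cancel₀ _ hC0.ne']
  have hlog : log (B * x) = log B + log C + n * log t := by
    rw [hx, log_mul (by positivity) (by positivity), log_mul (by positivity) (by positivity),
      log_rpow (by positivity)]
    ring
  have hmono : s - n * log s ≤ t - n * log t := monotoneOn_sub_mul_log hn0 hs (hs.trans hst) hst
  have hlog_le : log (B * x) ≤ t := by
    linarith [log_add_log_add_mul_log_le hn hC hB]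
  have hlog_nonneg : 0 ≤ log (B * x) := by
    rw [hlog]
    have := log_nonneg hB; have := log_nonneg hC; have := log_nonneg ht
    positivity
  calc C * log (B * x) ^ n ≤ C * t ^ n := by gcongr
    _ = x := hx.symm

theorem stmt0 (x n C B : ℝ) (hn : 1 ≤ n) (hC : 1 ≤ C) (hB : 1 ≤ B) (hx : 0 < x)
    (h : C * (2 * n) ^ n * (Real.log (2 * n * C * B)) ^ n ≤ x) :
    C * (Real.log (B * x)) ^ n ≤ x :=
  stmt0_general x n C B hn hC hB h
end

section
/- Let $(\bm{x}_t)_{t=1}^T$ be vectors in $\mathbb{R}^d$ with $\|\bm{x}_t\|_2 \le a$ for all $t$, and let $V_t = \lambda I + \sum_{s=1}^t \bm{x}_s \bm{x}_s^\top$ where $\lambda \ge \max\{1, a^2\}$. Then $\sum_{t=1}^T \bm{x}_t^\top V_{t-1}^{-1} \bm{x}_t \le 2d \log(1 + a^2 T/(d\lambda))$. -/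
/-!
By the matrix determinant lemma, `det V_{t+1} = det V_t * (1 + x_tᵀ V_t⁻¹ x_t)`, so the sum of
`log (1 + x_tᵀ V_t⁻¹ x_t)` telescopes to `log (det V_T / λ^d)`. AM-GM on the eigenvalues bounds
`det V_T` by `(tr V_T / d)^d ≤ (λ + a²T/d)^d`. Finally `V_t ⪰ λI` and `λ ≥ a²` force
`x_tᵀ V_t⁻¹ x_t ≤ 1`, and `u ≤ 2 log (1 + u)` for `0 ≤ u ≤ 2`.
-/

open Matrix Finset

variable {n : Type*} [DecidableEq n]

section

variable [Fintype n]

theorem Matrix.det_add_vecMulVec {R : Type*} [CommRing R] {A : Matrix n n R} (hA : IsUnit A.det)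
    (u v : n → R) : (A + vecMulVec u v).det = A.det * (1 + v ⬝ᵥ A⁻¹ *ᵥ u) := by
  rw [vecMulVec_eq Unit, det_add_replicateCol_mul_replicateRow hA]
  congr 1
  rw [det_unique, add_apply, one_apply_eq, Matrix.mul_assoc, ← replicateCol_mulVec]
  rfl

theorem Matrix.PosSemidef.det_le_trace_div_card_pow [Nonempty n] {M : Matrix n n ℝ}
    (hM : M.PosSemidef) : M.det ≤ (M.trace / Fintype.card n) ^ Fintype.card n := by
  set k := Fintype.card n
  have hk : (0 : ℝ) < k := by exact_mod_cast Fintype.card_pos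
  set ev := hM.isHermitian.eigenvalues
  have hev : ∀ i, 0 ≤ ev i := hM.eigenvalues_nonneg
  have amgm : ∏ i, ev i ^ (k : ℝ)⁻¹ ≤ ∑ i, (k : ℝ)⁻¹ * ev i :=
    Real.geom_mean_le_arith_mean_weighted univ _ ev (fun _ _ => by positivity)
      (by simp [k, hk.ne']) fun i _ => hev i
  calc M.det = ∏ i, ev i := by simp [hM.isHermitian.det_eq_prod_eigenvalues, ev]
    _ = (∏ i, ev i ^ (k : ℝ)⁻¹) ^ k := by
      rw [← prod_pow]
      refine prod_congr rfl fun i _ => ?_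
      rw [← Real.rpow_natCast, ← Real.rpow_mul (hev i), inv_mul_cancel₀ hk.ne', Real.rpow_one]
    _ ≤ (∑ i, (k : ℝ)⁻¹ * ev i) ^ k :=
      pow_le_pow_left₀ (prod_nonneg fun i _ => Real.rpow_nonneg (hev i) _) amgm k
    _ = (M.trace / k) ^ k := by
      rw [← mul_sum, hM.isHermitian.trace_eq_sum_eigenvalues, div_eq_inv_mul]
      simp [ev]

theorem Matrix.PosDef.dotProduct_inv_mulVec_le_one {M : Matrix n n ℝ} (hM : M.PosDef) {lam : ℝ}
    (hlam : (M - lam • 1).PosSemidef) {y : n → ℝ} (hy : y ⬝ᵥ y ≤ lam) :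
    y ⬝ᵥ M⁻¹ *ᵥ y ≤ 1 := by
  -- With `q = y ⬝ᵥ u`: `λ|u|² ≤ uᵀMu = q` and, by Cauchy-Schwarz, `q² ≤ |y|²|u|² ≤ λ|u|² ≤ q`.
  set u := M⁻¹ *ᵥ y
  have hMu : M *ᵥ u = y := by
    rw [mulVec_mulVec, mul_nonsing_inv _ ((isUnit_iff_isUnit_det M).mp hM.isUnit), one_mulVec]
  have hlow : lam * (u ⬝ᵥ u) ≤ y ⬝ᵥ u := by
    have := hlam.dotProduct_mulVec_nonneg u
    simp only [star_trivial, sub_mulVec, dotProduct_sub, hMu, smul_mulVec, one_mulVec,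
      dotProduct_smul, smul_eq_mul, dotProduct_comm u y] at this
    linarith
  have hCS : (y ⬝ᵥ u) ^ 2 ≤ (y ⬝ᵥ y) * (u ⬝ᵥ u) := by
    simpa [dotProduct, sq] using sum_mul_sq_le_sq_mul_sq univ y u
  have hyy : 0 ≤ y ⬝ᵥ y := dotProduct_self_star_nonneg y
  have huu : 0 ≤ u ⬝ᵥ u := dotProduct_self_star_nonneg u
  nlinarith [mul_le_mul_of_nonneg_right hy huu]

theorem Real.le_two_mul_log_one_add {x : ℝ} (h0 : 0 ≤ x) (h2 : x ≤ 2) :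
    x ≤ 2 * Real.log (1 + x) := by
  have hlog := Real.le_log_one_add_of_nonneg h0
  have hx : x / 2 ≤ 2 * x / (x + 2) := by
    rw [div_le_div_iff₀ two_pos (by linarith)]
    nlinarith
  linarith

end

-- With 0-based indexing this is the paper's `V_t`, built from `x 0, …, x (t - 1)`.
noncomputable def regularizedGram (lam : ℝ) (x : ℕ → n → ℝ) (t : ℕ) : Matrix n n ℝ :=
  lam • 1 + ∑ s ∈ range t, vecMulVec (x s) (x s)

namespace regularizedGram

variable {lam : ℝ} {x : ℕ → n → ℝ}

theorem succ (t : ℕ) :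
    regularizedGram lam x (t + 1) = regularizedGram lam x t + vecMulVec (x t) (x t) := by
  rw [regularizedGram, regularizedGram, sum_range_succ, add_assoc]

variable [Fintype n]

theorem sub_smul_one_posSemidef (t : ℕ) : (regularizedGram lam x t - lam • 1).PosSemidef := by
  rw [regularizedGram, add_sub_cancel_left]
  exact posSemidef_sum _ fun s _ => by simpa using posSemidef_vecMulVec_self_star (x s)

theorem posDef (hlam : 0 < lam) (t : ℕ) : (regularizedGram lam x t).PosDef := by
  have h : (lam • (1 : Matrix n n ℝ)).PosDef := by
    simpa [smul_one_eq_diagonal] using PosDef.diagonal fun _ : n => hlam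
  simpa using h.add_posSemidef (sub_smul_one_posSemidef (lam := lam) (x := x) t)

theorem trace_eq (t : ℕ) :
    (regularizedGram lam x t).trace = Fintype.card n * lam + ∑ s ∈ range t, x s ⬝ᵥ x s := by
  simp [regularizedGram, trace_sum, trace_vecMulVec, mul_comm]

theorem log_det (hlam : 0 < lam) (t : ℕ) :
    Real.log (regularizedGram lam x t).det = Fintype.card n * Real.log lam +
      ∑ s ∈ range t, Real.log (1 + x s ⬝ᵥ (regularizedGram lam x s)⁻¹ *ᵥ x s) := by
  induction t with
  | zero => simp [regularizedGram, Real.log_pow]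
  | succ t ih =>
    have hV := posDef hlam (x := x) t
    have hq : 0 ≤ x t ⬝ᵥ (regularizedGram lam x t)⁻¹ *ᵥ x t :=
      hV.inv.posSemidef.dotProduct_mulVec_nonneg (x t)
    rw [succ, det_add_vecMulVec ((isUnit_iff_isUnit_det _).mp hV.isUnit),
      Real.log_mul hV.det_pos.ne' (by linarith), ih, sum_range_succ, add_assoc]

theorem sum_log_one_add_le [Nonempty n] (hlam : 0 < lam) {b : ℝ} (hx : ∀ t, x t ⬝ᵥ x t ≤ b)
    (T : ℕ) : ∑ t ∈ range T, Real.log (1 + x t ⬝ᵥ (regularizedGram lam x t)⁻¹ *ᵥ x t) ≤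
      Fintype.card n * Real.log (1 + b * T / (Fintype.card n * lam)) := by
  set k := (Fintype.card n : ℝ)
  have hk : 0 < k := Nat.cast_pos.mpr Fintype.card_pos
  have hb : 0 ≤ b := le_trans (by simpa using dotProduct_self_star_nonneg (x 0)) (hx 0)
  have hV := posDef hlam (x := x) T
  have htrace : (regularizedGram lam x T).trace / k ≤ lam * (1 + b * T / (k * lam)) := by
    have hsum : ∑ s ∈ range T, x s ⬝ᵥ x s ≤ T * b := by
      simpa using sum_le_sum fun s (_ : s ∈ range T) => hx s
    rw [trace_eq, div_le_iff₀ hk]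
    field_simp
    linarith
  have hdet : (regularizedGram lam x T).det ≤ (lam * (1 + b * T / (k * lam))) ^ Fintype.card n :=
    hV.posSemidef.det_le_trace_div_card_pow.trans
      (pow_le_pow_left₀ (div_nonneg hV.posSemidef.trace_nonneg hk.le) htrace _)
  have hlog := Real.log_le_log hV.det_pos hdet
  rw [log_det hlam, Real.log_pow, Real.log_mul hlam.ne' (by positivity)] at hlog
  linarith

end regularizedGram

open regularizedGram in
theorem stmt9_general (d T : ℕ) (hd : 0 < d) (a lam : ℝ)
    (hlam : max 1 (a ^ 2) ≤ lam)
    (x : ℕ → Fin d → ℝ) (hx : ∀ t, x t ⬝ᵥ x t ≤ a ^ 2) :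
    ∑ t ∈ Finset.range T,
        (x t ⬝ᵥ
          (((lam • (1 : Matrix (Fin d) (Fin d) ℝ)
              + ∑ s ∈ Finset.range t, vecMulVec (x s) (x s))⁻¹) *ᵥ x t))
      ≤ 2 * d * Real.log (1 + a ^ 2 * T / (d * lam)) := by
  have : Nonempty (Fin d) := ⟨⟨0, hd⟩⟩
  have hlam0 : 0 < lam := one_pos.trans_le ((le_max_left _ _).trans hlam)
  have ha : a ^ 2 ≤ lam := (le_max_right _ _).trans hlam
  set q : ℕ → ℝ := fun t => x t ⬝ᵥ (regularizedGram lam x t)⁻¹ *ᵥ x t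
  have hq : ∀ t, q t ≤ 2 * Real.log (1 + q t) := fun t =>
    Real.le_two_mul_log_one_add ((posDef hlam0 t).inv.posSemidef.dotProduct_mulVec_nonneg (x t))
      (((posDef hlam0 t).dotProduct_inv_mulVec_le_one (sub_smul_one_posSemidef t)
        ((hx t).trans ha)).trans one_le_two)
  calc ∑ t ∈ range T, q t ≤ ∑ t ∈ range T, 2 * Real.log (1 + q t) := sum_le_sum fun t _ => hq t
    _ = 2 * ∑ t ∈ range T, Real.log (1 + q t) := (mul_sum ..).symm
    _ ≤ 2 * d * Real.log (1 + a ^ 2 * T / (d * lam)) := by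
      rw [mul_assoc]
      gcongr
      simpa using sum_log_one_add_le hlam0 hx T

theorem stmt9 (d T : ℕ) (hd : 0 < d) (a lam : ℝ) (ha : 0 ≤ a)
    (hlam : max 1 (a ^ 2) ≤ lam)
    (x : ℕ → Fin d → ℝ) (hx : ∀ t, x t ⬝ᵥ x t ≤ a ^ 2) :
    ∑ t ∈ Finset.range T,
        (x t ⬝ᵥ
          (((lam • (1 : Matrix (Fin d) (Fin d) ℝ)
              + ∑ s ∈ Finset.range t, vecMulVec (x s) (x s))⁻¹) *ᵥ x t))
      ≤ 2 * d * Real.log (1 + a ^ 2 * T / (d * lam)) :=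
  stmt9_general d T hd a lam hlam x hx
end
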